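/- arXiv:0808.0348 — 3 statements merged into one kernel-verified Lean document; each statement's English description precedes it below -/
import Mathlib

section
/- For any differentiable function F : ℝ → ℝ, the transformation (x,y) ↦ (x̃,ỹ) with x̃ = F(x+2√y) + F(x-2√y) and ỹ = (1/4)[F(x+2√y) - F(x-2√y)]² maps, for y > 0, solutions of the ODE (dy/dx)² = y to solutions of (dỹ/dx̃)² = ỹ. -/
/-!
Write `u = x + 2√y`, `v = x - 2√y`. Along a solution of `y'² = y` with `y > 0` one has
`u' = 1 + y'/√y` and `v' = 1 - y'/√y`, so `u' v' = 1 - y'²/y = 0`: each solution is a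
characteristic `u = const` or `v = const`. With `P = F ∘ u`, `Q = F ∘ v` the new variables are
`x̃ = P + Q`, `ỹ = (P - Q)²/4`, and
`ỹ'² - ỹ x̃'² = ¼ (P - Q)² ((P' - Q')² - (P' + Q')²) = -(P - Q)² P' Q'`,
which vanishes because `P' Q' = F'(u) F'(v) u' v' = 0`.
-/

open Real

section Characteristics

variable {y : ℝ → ℝ} {y' x : ℝ}

theorem hasDerivAt_two_mul_sqrt (hy : HasDerivAt y y' x) (hpos : 0 < y x) :
    HasDerivAt (fun t => 2 * √(y t)) (y' / √(y x)) x :=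
  ((hy.sqrt hpos.ne').const_mul 2).congr_deriv (by field_simp)

theorem characteristic_derivs_mul_eq_zero (hpos : 0 < y x) (hsol : y' ^ 2 = y x) :
    (1 + y' / √(y x)) * (1 - y' / √(y x)) = 0 := by
  have hratio : (y' / √(y x)) ^ 2 = 1 := by
    rw [div_pow, sq_sqrt hpos.le, hsol, div_self hpos.ne']
  linear_combination -hratio

end Characteristics

theorem deriv_quarter_sub_sq_sq_of_mul_eq_zero {P Q : ℝ → ℝ} {p q x : ℝ} (hP : HasDerivAt P p x)
    (hQ : HasDerivAt Q q x) (hpq : p * q = 0) :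
    deriv (fun t => (1 / 4) * (P t - Q t) ^ 2) x ^ 2
      = ((1 / 4) * (P x - Q x) ^ 2) * deriv (fun t => P t + Q t) x ^ 2 := by
  have hdiff : HasDerivAt (fun t => (1 / 4) * (P t - Q t) ^ 2)
      ((1 / 4) * (2 * (P x - Q x) * (p - q))) x :=
    (((hP.sub hQ).pow 2).const_mul (1 / 4 : ℝ)).congr_deriv (by simp)
  have hsum : HasDerivAt (fun t => P t + Q t) (p + q) x := hP.add hQ
  rw [hdiff.deriv, hsum.deriv]
  linear_combination (-(P x - Q x) ^ 2) * hpq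

/-- For any differentiable `F`, the transformation
`x̃ = F(x+2√y) + F(x-2√y)`, `ỹ = (1/4)[F(x+2√y) - F(x-2√y)]²`
maps, for `y > 0`, solutions of `(dy/dx)² = y` to solutions of `(dỹ/dx̃)² = ỹ`. -/
theorem stmt5 (F : ℝ → ℝ) (hF : Differentiable ℝ F) (y : ℝ → ℝ)
    (hy : Differentiable ℝ y) (x : ℝ) (hpos : y x > 0)
    (hsol : (deriv y x) ^ 2 = y x) :
    (deriv (fun t =>
        (1 / 4) * (F (t + 2 * Real.sqrt (y t)) - F (t - 2 * Real.sqrt (y t))) ^ 2) x) ^ 2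
      = ((1 / 4) * (F (x + 2 * Real.sqrt (y x)) - F (x - 2 * Real.sqrt (y x))) ^ 2)
        * (deriv (fun t =>
            F (t + 2 * Real.sqrt (y t)) + F (t - 2 * Real.sqrt (y t))) x) ^ 2 := by
  have hroot := hasDerivAt_two_mul_sqrt (hy x).hasDerivAt hpos
  set a := x + 2 * √(y x)
  set b := x - 2 * √(y x)
  have hu : HasDerivAt (fun t => F (t + 2 * √(y t))) (deriv F a * (1 + deriv y x / √(y x))) x :=
    (hF a).hasDerivAt.comp x ((hasDerivAt_id x).add hroot)
  have hv : HasDerivAt (fun t => F (t - 2 * √(y t))) (deriv F b * (1 - deriv y x / √(y x))) x :=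
    (hF b).hasDerivAt.comp x ((hasDerivAt_id x).sub hroot)
  refine deriv_quarter_sub_sq_sq_of_mul_eq_zero hu hv ?_
  linear_combination (deriv F a * deriv F b) * characteristic_derivs_mul_eq_zero hpos hsol
end

section
/- For the Vieta map V(p,q) = (-p²-pq-q², p²q+pq²) = (A,B), the fiber V⁻¹(A,B) of any point (A,B) in the image is exactly one orbit of the D₃-action generated by g₁(p,q) = (p,-p-q), g₂(p,q) = (-p-q,q), g₃(p,q) = (q,p). -/
/-- The fiber of the Vieta map `V(p,q) = (-p²-pq-q², p²q+pq²)` through any point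
is exactly the orbit of the `D₃`-action generated by `g₁(p,q) = (p,-p-q)`,
`g₂(p,q) = (-p-q,q)`, `g₃(p,q) = (q,p)`, i.e. the set
`{(p,q), (p,-p-q), (-p-q,q), (q,p), (q,-p-q), (-p-q,p)}`. -/
theorem stmt11 (p q p' q' : ℝ) :
    ((-p' ^ 2 - p' * q' - q' ^ 2, p' ^ 2 * q' + p' * q' ^ 2)
        = ((-p ^ 2 - p * q - q ^ 2, p ^ 2 * q + p * q ^ 2) : ℝ × ℝ)) ↔
      (p', q') ∈ ({(p, q), (p, -p - q), (-p - q, q), (q, p), (q, -p - q),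
        (-p - q, p)} : Set (ℝ × ℝ)) := by
  simp only [Set.mem_insert_iff, Set.mem_singleton_iff, Prod.mk.injEq]
  constructor
  · rintro ⟨hA, hB⟩
    have h1 : (p' - p) * (p' - q) * (p' + p + q) = 0 := by
      linear_combination (-p') * hA - hB
    rcases mul_eq_zero.mp h1 with h2 | h3
    · rcases mul_eq_zero.mp h2 with h4 | h5
      · -- p' = p
        have hp : p' = p := by linarith
        have h6 : (q' - q) * (q' + p + q) = 0 := by
          linear_combination -hA - (q' + p' + p) * hp
        rcases mul_eq_zero.mp h6 with h7 | h8
        · exact Or.inl ⟨hp, by linarith⟩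
        · exact Or.inr (Or.inl ⟨hp, by linarith⟩)
      · -- p' = q
        have hp : p' = q := by linarith
        have h6 : (q' - p) * (q' + p + q) = 0 := by
          linear_combination -hA - (q' + p' + q) * hp
        rcases mul_eq_zero.mp h6 with h7 | h8
        · exact Or.inr (Or.inr (Or.inr (Or.inl ⟨hp, by linarith⟩)))
        · exact Or.inr (Or.inr (Or.inr (Or.inr (Or.inl ⟨hp, by linarith⟩))))
    · -- p' = -p-q
      have hp : p' = -p - q := by linarith
      have h6 : (q' - p) * (q' - q) = 0 := by
        linear_combination -hA + (p + q - p' - q') * hp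
      rcases mul_eq_zero.mp h6 with h7 | h8
      · exact Or.inr (Or.inr (Or.inr (Or.inr (Or.inr ⟨hp, by linarith⟩))))
      · exact Or.inr (Or.inr (Or.inl ⟨hp, by linarith⟩))
  · rintro (⟨h1, h2⟩ | ⟨h1, h2⟩ | ⟨h1, h2⟩ | ⟨h1, h2⟩ | ⟨h1, h2⟩ | ⟨h1, h2⟩) <;>
      subst h1 <;> subst h2 <;> constructor <;> ring
end

section
/- The function I(x,y,p) = p²(x + 3p²/8)³ is a first integral of the characteristic field of the implicit ODE p³ + 2xp + y = 0: on the surface M = {(x,y,p) : p³ + 2xp + y = 0}, the derivative of I along the field τ = F_p ∂_x + pF_p ∂_y - (F_x + pF_y) ∂_p with F = p³ + 2xp + y vanishes identically. -/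
/-!
With `s = x + 3p²/8`, the function `I = p² s³` has `∂ₓI = 3p²s²`, `∂_y I = 0` and
`∂ₚI = 2ps³ + (9/4)p³s²`. Hence
`τ(I) = (3p² + 2x)·3p²s² - 3p·∂ₚI = 3p²s²·((3p² + 2x) - 2s - 9p²/4)`,
and the last factor vanishes because `2s = 2x + 3p²/4`.
-/

open ContinuousLinearMap

theorem hasFDerivAt_firstIntegral (x y p : ℝ) :
    HasFDerivAt (fun v : ℝ × ℝ × ℝ => v.2.2 ^ 2 * (v.1 + 3 * v.2.2 ^ 2 / 8) ^ 3)
      ((3 * p ^ 2 * (x + 3 * p ^ 2 / 8) ^ 2) • fst ℝ ℝ (ℝ × ℝ) +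
        (2 * p * (x + 3 * p ^ 2 / 8) ^ 3 + 9 / 4 * p ^ 3 * (x + 3 * p ^ 2 / 8) ^ 2) •
          (snd ℝ ℝ ℝ).comp (snd ℝ ℝ (ℝ × ℝ)))
      (x, y, p) := by
  have hx : HasFDerivAt (fun v : ℝ × ℝ × ℝ => v.1) (fst ℝ ℝ (ℝ × ℝ)) (x, y, p) :=
    hasFDerivAt_fst
  have hp : HasFDerivAt (fun v : ℝ × ℝ × ℝ => v.2.2) ((snd ℝ ℝ ℝ).comp (snd ℝ ℝ (ℝ × ℝ)))
      (x, y, p) :=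
    hasFDerivAt_snd.snd
  have H := (hp.pow 2).fun_mul ((hx.fun_add (((hp.pow 2).const_mul 3).mul_const 8⁻¹)).pow 3)
  simp only [div_eq_mul_inv]
  refine H.congr_fderiv (ContinuousLinearMap.ext fun v => ?_)
  simp only [Nat.add_one_sub_one, nsmul_eq_mul, Nat.cast_ofNat, pow_one, smul_add, add_apply,
    smul_apply, coe_fst', smul_eq_mul, comp_apply, coe_snd']
  ring

theorem stmt15_general (x y p : ℝ) :
    fderiv ℝ (fun v : ℝ × ℝ × ℝ => v.2.2 ^ 2 * (v.1 + 3 * v.2.2 ^ 2 / 8) ^ 3)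
      (x, y, p) (3 * p ^ 2 + 2 * x, p * (3 * p ^ 2 + 2 * x), -3 * p) = 0 := by
  rw [(hasFDerivAt_firstIntegral x y p).fderiv]
  simp only [add_apply, smul_apply, coe_fst', smul_eq_mul, comp_apply, coe_snd']
  ring

/-- `I(x,y,p) = p²(x + 3p²/8)³` is a first integral of the characteristic field
`τ = (3p²+2x) ∂_x + p(3p²+2x) ∂_y - 3p ∂_p` of the implicit ODE
`p³ + 2xp + y = 0` on its surface `M`. -/
theorem stmt15 (x y p : ℝ) (hM : p ^ 3 + 2 * x * p + y = 0) :
    fderiv ℝ (fun v : ℝ × ℝ × ℝ => v.2.2 ^ 2 * (v.1 + 3 * v.2.2 ^ 2 / 8) ^ 3)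
      (x, y, p) (3 * p ^ 2 + 2 * x, p * (3 * p ^ 2 + 2 * x), -3 * p) = 0 :=
  stmt15_general x y p
end
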